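/- arXiv:2406.02256 — 4 statements merged into one kernel-verified Lean document; each statement's English description precedes it below -/
import Mathlib

section
/- For every real α and every R > 0 with 4παR < 1, the equation s - e^{-sR}/R = -4πα has a unique positive solution s. -/
theorem exists_unique_pos_s (α R : ℝ) (hR : 0 < R) (h : 4 * Real.pi * α * R < 1) :
    ∃! s : ℝ, 0 < s ∧ s - Real.exp (-(s * R)) / R = -(4 * Real.pi * α) := by
  set c : ℝ := -(4 * Real.pi * α) with hc
  set f : ℝ → ℝ := fun s => s - Real.exp (-(s * R)) / R with hf
  have hmono : StrictMono f := by
    have h1 : Monotone fun s : ℝ => -(Real.exp (-(s * R)) / R) := by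
      intro a b hab
      have he : Real.exp (-(b * R)) ≤ Real.exp (-(a * R)) :=
        Real.exp_le_exp.mpr (by nlinarith)
      simp only [neg_le_neg_iff]
      exact div_le_div_of_nonneg_right he hR.le
    have := strictMono_id.add_monotone h1
    simpa [hf, sub_eq_add_neg] using this
  have hcont : Continuous f := by
    apply Continuous.sub continuous_id
    exact ((Real.continuous_exp.comp (by continuity)).div_const R)
  have hf0 : f 0 = -(1 / R) := by simp [hf]
  have hf0c : f 0 < c := by
    rw [hf0, hc]
    rw [neg_lt_neg_iff, lt_div_iff₀ hR]
    linarith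
  set M : ℝ := c + 1 / R with hM
  have hM0 : 0 < M := by
    have : -(1/R) < c := hf0 ▸ hf0c
    simp only [hM]; linarith
  have hfM : c ≤ f M := by
    have he : Real.exp (-(M * R)) ≤ 1 := by
      rw [Real.exp_le_one_iff]
      nlinarith
    have : Real.exp (-(M * R)) / R ≤ 1 / R := div_le_div_of_nonneg_right he hR.le
    simp only [hf, hM]
    linarith
  have hIVT := intermediate_value_Icc (le_of_lt hM0) hcont.continuousOn
  have hcmem : c ∈ Set.Icc (f 0) (f M) := ⟨le_of_lt hf0c, hfM⟩
  obtain ⟨s, hsIcc, hfs⟩ := hIVT hcmem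
  have hspos : 0 < s := by
    rcases lt_or_eq_of_le hsIcc.1 with h' | h'
    · exact h'
    · exfalso; rw [← h'] at hfs; exact absurd hfs (ne_of_lt hf0c)
  refine ⟨s, ⟨hspos, hfs⟩, ?_⟩
  rintro t ⟨_, hft⟩
  exact hmono.injective (hft.trans hfs.symm)
end

section
/- Fix α ∈ ℝ and let s_α(R) denote the unique positive solution s of s - e^{-sR}/R = -4πα (which exists for small R). For every ε > 0 there exists R₀ > 0 such that for all 0 < R < R₀ one has (t₀ - ε)/R < s_α(R) < (t₀ + ε)/R, where t₀ is the unique positive root of t - e^{-t} = 0. -/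
theorem s_alpha_asymptotics (α : ℝ) (t₀ : ℝ) (ht₀ : 0 < t₀ ∧ t₀ - Real.exp (-t₀) = 0)
    (sα : ℝ → ℝ)
    (hsα : ∀ R : ℝ, 0 < R → 4 * Real.pi * α * R < 1 →
      0 < sα R ∧ sα R - Real.exp (-(sα R * R)) / R = -(4 * Real.pi * α))
    (ε : ℝ) (hε : 0 < ε) :
    ∃ R₀ > 0, ∀ R : ℝ, 0 < R → R < R₀ →
      (t₀ - ε) / R < sα R ∧ sα R < (t₀ + ε) / R := by
  obtain ⟨ht₀pos, ht₀eq⟩ := ht₀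
  have hpi := Real.pi_pos
  -- f(t₀ - ε) < 0 < f(t₀ + ε)
  have h1 : (t₀ - ε) - Real.exp (-(t₀ - ε)) < 0 := by
    have : Real.exp (-t₀) < Real.exp (-(t₀ - ε)) := Real.exp_lt_exp.mpr (by linarith)
    linarith
  have h2 : 0 < (t₀ + ε) - Real.exp (-(t₀ + ε)) := by
    have : Real.exp (-(t₀ + ε)) < Real.exp (-t₀) := Real.exp_lt_exp.mpr (by linarith)
    linarith
  set δ : ℝ := min (Real.exp (-(t₀ - ε)) - (t₀ - ε)) ((t₀ + ε) - Real.exp (-(t₀ + ε))) with hδdef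
  have hδpos : 0 < δ := lt_min (by linarith) h2
  set δ' : ℝ := min δ (1/2) with hδ'def
  have hδ'pos : 0 < δ' := lt_min hδpos (by norm_num)
  refine ⟨δ' / (4 * Real.pi * |α| + 1), div_pos hδ'pos (by positivity), ?_⟩
  intro R hR hRlt
  have hαR : 4 * Real.pi * |α| * R < δ' := by
    have hd : (0:ℝ) < 4 * Real.pi * |α| + 1 := by positivity
    have h := mul_lt_mul_of_pos_left hRlt hd
    rw [mul_div_cancel₀ _ (ne_of_gt hd)] at h
    nlinarith [abs_nonneg α]
  have habs1 : 4 * Real.pi * α * R ≤ 4 * Real.pi * |α| * R := by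
    nlinarith [le_abs_self α, mul_pos hpi hR]
  have habs2 : -(4 * Real.pi * α * R) ≤ 4 * Real.pi * |α| * R := by
    nlinarith [neg_abs_le α, mul_pos hpi hR]
  have hcond : 4 * Real.pi * α * R < 1 := by
    have : δ' ≤ 1/2 := min_le_right _ _
    linarith
  obtain ⟨hspos, heq⟩ := hsα R hR hcond
  have hRne : R ≠ 0 := ne_of_gt hR
  have heq' : sα R * R - Real.exp (-(sα R * R)) = -(4 * Real.pi * α) * R := by
    have := congrArg (· * R) heq
    field_simp at this
    linarith
  have hδ1 : δ' ≤ Real.exp (-(t₀ - ε)) - (t₀ - ε) :=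
    le_trans (min_le_left _ _) (min_le_left _ _)
  have hδ2 : δ' ≤ (t₀ + ε) - Real.exp (-(t₀ + ε)) :=
    le_trans (min_le_left _ _) (min_le_right _ _)
  have hlow : t₀ - ε < sα R * R := by
    by_contra h
    push_neg at h
    have : Real.exp (-(t₀ - ε)) ≤ Real.exp (-(sα R * R)) :=
      Real.exp_le_exp.mpr (by linarith)
    linarith
  have hhigh : sα R * R < t₀ + ε := by
    by_contra h
    push_neg at h
    have : Real.exp (-(sα R * R)) ≤ Real.exp (-(t₀ + ε)) :=
      Real.exp_le_exp.mpr (by linarith)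
    linarith
  constructor
  · rw [div_lt_iff₀ hR]; linarith
  · rw [lt_div_iff₀ hR]; linarith
end

section
/- Let A be an n×n Hermitian matrix and let A' be the (n-1)×(n-1) Hermitian matrix obtained by deleting the first row and column of A. If μ₁ ≤ ⋯ ≤ μ_n are the eigenvalues of A and μ'₁ ≤ ⋯ ≤ μ'_{n-1} those of A', then μ_j ≤ μ'_j ≤ μ_{j+1} for every j = 1, …, n-1 (Cauchy interlacing). -/
open Matrix Module Finset

variable {N : ℕ}

noncomputable def qf (A : Matrix (Fin N) (Fin N) ℂ) (x : EuclideanSpace ℂ (Fin N)) : ℝ :=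
  Complex.re (star ((WithLp.equiv 2 _) x) ⬝ᵥ A *ᵥ (WithLp.equiv 2 _) x)

lemma repr_mulVec {A : Matrix (Fin N) (Fin N) ℂ} (hA : A.IsHermitian)
    (x : EuclideanSpace ℂ (Fin N)) (i : Fin N) :
    hA.eigenvectorBasis.repr ((WithLp.equiv 2 _).symm (A *ᵥ (WithLp.equiv 2 _) x)) i
      = hA.eigenvalues i * hA.eigenvectorBasis.repr x i := by
  rw [OrthonormalBasis.repr_apply_apply, OrthonormalBasis.repr_apply_apply,
    EuclideanSpace.inner_eq_star_dotProduct, EuclideanSpace.inner_eq_star_dotProduct]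
  simp only [WithLp.equiv_symm_apply, WithLp.ofLp_toLp, WithLp.equiv_apply]
  rw [dotProduct_comm, Matrix.dotProduct_mulVec]
  have h1 : star ((WithLp.equiv 2 _) (hA.eigenvectorBasis i)) ᵥ* A
      = (hA.eigenvalues i : ℂ) • star ((WithLp.equiv 2 _) (hA.eigenvectorBasis i)) := by
    have h0 : star ((WithLp.equiv 2 _) (hA.eigenvectorBasis i)) ᵥ* A
        = star (A *ᵥ (WithLp.equiv 2 _) (hA.eigenvectorBasis i)) := by
      rw [Matrix.star_mulVec, hA.eq]
    rw [h0]; simp only [WithLp.equiv_apply]; rw [hA.mulVec_eigenvectorBasis]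
    simp [star_smul]
  simp only [WithLp.equiv_apply] at h1
  rw [h1, smul_dotProduct]; simp [smul_eq_mul, dotProduct_comm]

lemma qf_eq_sum {A : Matrix (Fin N) (Fin N) ℂ} (hA : A.IsHermitian)
    (x : EuclideanSpace ℂ (Fin N)) :
    qf A x = ∑ i, hA.eigenvalues i * ‖hA.eigenvectorBasis.repr x i‖ ^ 2 := by
  have h1 : qf A x = Complex.re
      (inner ℂ x ((WithLp.equiv 2 _).symm (A *ᵥ (WithLp.equiv 2 _) x)) : ℂ) := by
    rw [EuclideanSpace.inner_eq_star_dotProduct]; simp [qf]; rw [dotProduct_comm]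
  rw [h1, ← hA.eigenvectorBasis.repr.inner_map_map x]
  rw [PiLp.inner_apply]
  simp only [RCLike.inner_apply, repr_mulVec hA, map_sum]
  rw [Complex.re_sum]
  refine Finset.sum_congr rfl fun i _ => ?_
  rw [mul_assoc, RCLike.mul_conj]
  simp [← Complex.ofReal_pow]

lemma norm_sq_eq_sum {A : Matrix (Fin N) (Fin N) ℂ} (hA : A.IsHermitian)
    (x : EuclideanSpace ℂ (Fin N)) :
    ‖x‖ ^ 2 = ∑ i, ‖hA.eigenvectorBasis.repr x i‖ ^ 2 := by
  rw [← hA.eigenvectorBasis.repr.norm_map x, EuclideanSpace.norm_eq, Real.sq_sqrt]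
  positivity

lemma repr_zero_of_mem_span {A : Matrix (Fin N) (Fin N) ℂ} (hA : A.IsHermitian)
    (S : Finset (Fin N)) (x : EuclideanSpace ℂ (Fin N))
    (hx : x ∈ Submodule.span ℂ (hA.eigenvectorBasis '' S)) (i : Fin N) (hi : i ∉ S) :
    hA.eigenvectorBasis.repr x i = 0 := by
  induction hx using Submodule.span_induction with
  | mem y hy =>
    obtain ⟨k, hk, rfl⟩ := hy
    rw [OrthonormalBasis.repr_apply_apply]
    exact hA.eigenvectorBasis.orthonormal.2 (fun h => hi (h ▸ hk))
  | zero => simp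
  | add y z _ _ hy hz => simp [hy, hz]
  | smul c y _ hy => simp [hy]

open scoped Classical in
lemma finrank_span_basis_image {A : Matrix (Fin N) (Fin N) ℂ} (hA : A.IsHermitian)
    (S : Finset (Fin N)) :
    finrank ℂ (Submodule.span ℂ (hA.eigenvectorBasis '' S)) = S.card := by
  have hinj : Function.Injective hA.eigenvectorBasis := hA.eigenvectorBasis.toBasis.injective
  have h1 : (hA.eigenvectorBasis '' S : Set _) = ↑(S.image hA.eigenvectorBasis) := by
    simp
  rw [h1, finrank_span_finset_eq_card, Finset.card_image_of_injective _ hinj]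
  have h2 : ↑(S.image hA.eigenvectorBasis) ⊆ Set.range hA.eigenvectorBasis := by
    intro y hy; simp only [Finset.coe_image] at hy
    obtain ⟨k, _, rfl⟩ := hy; exact Set.mem_range_self k
  exact ((linearIndepOn_id_range_iff hinj).mpr hA.eigenvectorBasis.toBasis.linearIndependent).mono h2

lemma qf_le_of_mem_span {A : Matrix (Fin N) (Fin N) ℂ} (hA : A.IsHermitian)
    (S : Finset (Fin N)) (μ : ℝ) (h : ∀ i ∈ S, hA.eigenvalues i ≤ μ)
    (x : EuclideanSpace ℂ (Fin N))
    (hx : x ∈ Submodule.span ℂ (hA.eigenvectorBasis '' S)) :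
    qf A x ≤ μ * ‖x‖ ^ 2 := by
  rw [qf_eq_sum hA, norm_sq_eq_sum hA, Finset.mul_sum]
  refine Finset.sum_le_sum fun i _ => ?_
  by_cases hi : i ∈ S
  · exact mul_le_mul_of_nonneg_right (h i hi) (by positivity)
  · rw [repr_zero_of_mem_span hA S x hx i hi]; simp

lemma le_qf_of_mem_span {A : Matrix (Fin N) (Fin N) ℂ} (hA : A.IsHermitian)
    (S : Finset (Fin N)) (μ : ℝ) (h : ∀ i ∈ S, μ ≤ hA.eigenvalues i)
    (x : EuclideanSpace ℂ (Fin N))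
    (hx : x ∈ Submodule.span ℂ (hA.eigenvectorBasis '' S)) :
    μ * ‖x‖ ^ 2 ≤ qf A x := by
  rw [qf_eq_sum hA, norm_sq_eq_sum hA, Finset.mul_sum]
  refine Finset.sum_le_sum fun i _ => ?_
  by_cases hi : i ∈ S
  · exact mul_le_mul_of_nonneg_right (h i hi) (by positivity)
  · rw [repr_zero_of_mem_span hA S x hx i hi]; simp

lemma exists_low {A : Matrix (Fin N) (Fin N) ℂ} (hA : A.IsHermitian) (k : Fin N) :
    ∃ U : Submodule ℂ (EuclideanSpace ℂ (Fin N)), finrank ℂ U = k + 1 ∧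
      ∀ x ∈ U, qf A x ≤ (hA.eigenvalues ∘ Tuple.sort hA.eigenvalues) k * ‖x‖ ^ 2 := by
  set σ := Tuple.sort hA.eigenvalues
  refine ⟨Submodule.span ℂ (hA.eigenvectorBasis '' ((Finset.Iic k).image σ)), ?_, ?_⟩
  · rw [finrank_span_basis_image, Finset.card_image_of_injective _ σ.injective, Fin.card_Iic]
  · intro x hx
    refine qf_le_of_mem_span hA _ _ (fun i hi => ?_) x hx
    obtain ⟨m, hm, rfl⟩ := Finset.mem_image.mp hi
    exact Tuple.monotone_sort hA.eigenvalues (Finset.mem_Iic.mp hm)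

lemma exists_high {A : Matrix (Fin N) (Fin N) ℂ} (hA : A.IsHermitian) (k : Fin N) :
    ∃ U : Submodule ℂ (EuclideanSpace ℂ (Fin N)), finrank ℂ U = N - k ∧
      ∀ x ∈ U, (hA.eigenvalues ∘ Tuple.sort hA.eigenvalues) k * ‖x‖ ^ 2 ≤ qf A x := by
  set σ := Tuple.sort hA.eigenvalues
  refine ⟨Submodule.span ℂ (hA.eigenvectorBasis '' ((Finset.Ici k).image σ)), ?_, ?_⟩
  · rw [finrank_span_basis_image, Finset.card_image_of_injective _ σ.injective, Fin.card_Ici]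
  · intro x hx
    refine le_qf_of_mem_span hA _ _ (fun i hi => ?_) x hx
    obtain ⟨m, hm, rfl⟩ := Finset.mem_image.mp hi
    exact Tuple.monotone_sort hA.eigenvalues (Finset.mem_Ici.mp hm)

noncomputable def padL (n : ℕ) : EuclideanSpace ℂ (Fin n) →ₗ[ℂ] EuclideanSpace ℂ (Fin (n+1)) where
  toFun y := (WithLp.equiv 2 _).symm (Fin.cons 0 ((WithLp.equiv 2 _) y))
  map_add' y z := by
    apply (WithLp.equiv 2 _).injective
    ext i
    induction i using Fin.cases <;> simp
  map_smul' c y := by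
    apply (WithLp.equiv 2 _).injective
    ext i
    induction i using Fin.cases <;> simp

lemma padL_injective (n : ℕ) : Function.Injective (padL n) := by
  intro y z h
  apply (WithLp.equiv 2 _).injective
  ext i
  have := congrArg (fun w => (WithLp.equiv 2 (Fin (n+1) → ℂ)) w i.succ) h
  simpa [padL] using this

lemma norm_padL (n : ℕ) (y : EuclideanSpace ℂ (Fin n)) : ‖padL n y‖ = ‖y‖ := by
  rw [EuclideanSpace.norm_eq, EuclideanSpace.norm_eq]
  congr 1
  rw [Fin.sum_univ_succ]
  simp [padL]

lemma qf_padL (n : ℕ) (A : Matrix (Fin (n+1)) (Fin (n+1)) ℂ) (y : EuclideanSpace ℂ (Fin n)) :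
    qf A (padL n y) = qf (A.submatrix Fin.succ Fin.succ) y := by
  unfold qf padL
  congr 1
  simp only [LinearMap.coe_mk, AddHom.coe_mk, Equiv.apply_symm_apply]
  rw [dotProduct, dotProduct, Fin.sum_univ_succ]
  simp only [Fin.cons_zero, star_zero, Pi.star_apply, zero_mul, zero_add, Fin.cons_succ]
  refine Finset.sum_congr rfl fun i _ => ?_
  congr 1
  rw [Matrix.mulVec, Matrix.mulVec, dotProduct, dotProduct, Fin.sum_univ_succ]
  simp [Matrix.submatrix]

lemma exists_ne_zero_mem_inf {M : Type*} [NormedAddCommGroup M] [InnerProductSpace ℂ M]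
    [FiniteDimensional ℂ M] (U W : Submodule ℂ M)
    (h : finrank ℂ M < finrank ℂ U + finrank ℂ W) :
    ∃ x : M, x ≠ 0 ∧ x ∈ U ∧ x ∈ W := by
  have h1 := Submodule.finrank_sup_add_finrank_inf_eq U W
  have h2 : finrank ℂ ↥(U ⊔ W) ≤ finrank ℂ M := Submodule.finrank_le _
  have h3 : 0 < finrank ℂ ↥(U ⊓ W) := by omega
  have h4 : U ⊓ W ≠ ⊥ := by
    intro hbot
    rw [hbot, finrank_bot] at h3
    exact lt_irrefl 0 h3
  obtain ⟨x, hx, hx0⟩ := Submodule.exists_mem_ne_zero_of_ne_bot h4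
  exact ⟨x, hx0, hx.1, hx.2⟩

theorem cauchy_interlacing (n : ℕ) (A : Matrix (Fin (n + 1)) (Fin (n + 1)) ℂ)
    (hA : A.IsHermitian) (hA' : (A.submatrix Fin.succ Fin.succ).IsHermitian)
    (j : Fin n) :
    (hA.eigenvalues ∘ Tuple.sort hA.eigenvalues) j.castSucc ≤
        (hA'.eigenvalues ∘ Tuple.sort hA'.eigenvalues) j ∧
      (hA'.eigenvalues ∘ Tuple.sort hA'.eigenvalues) j ≤
        (hA.eigenvalues ∘ Tuple.sort hA.eigenvalues) j.succ := by
  have hcard : finrank ℂ (EuclideanSpace ℂ (Fin (n+1))) = n + 1 := by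
    simp [finrank_euclideanSpace]
  have hjlt : (j : ℕ) < n := j.isLt
  constructor
  · obtain ⟨U, hU, hUq⟩ := exists_high hA j.castSucc
    obtain ⟨W', hW', hWq⟩ := exists_low hA' j
    have hW : finrank ℂ (W'.map (padL n)) = (j : ℕ) + 1 := by
      rw [← (Submodule.equivMapOfInjective _ (padL_injective n) W').finrank_eq, hW']
    obtain ⟨x, hx0, hxU, hxW⟩ := exists_ne_zero_mem_inf U (W'.map (padL n)) (by
      rw [hcard, hU, hW, Fin.coe_castSucc]; omega)
    obtain ⟨y, hyW', rfl⟩ := hxW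
    have h1 := hUq _ hxU
    have h2 := hWq y hyW'
    rw [← qf_padL n A y, ← norm_padL n y] at h2
    have hpos : (0:ℝ) < ‖padL n y‖ ^ 2 := by
      have : padL n y ≠ 0 := hx0
      exact pow_pos (norm_pos_iff.mpr this) 2
    exact le_of_mul_le_mul_right (h1.trans h2) hpos
  · obtain ⟨U, hU, hUq⟩ := exists_low hA j.succ
    obtain ⟨W', hW', hWq⟩ := exists_high hA' j
    have hW : finrank ℂ (W'.map (padL n)) = n - (j : ℕ) := by
      rw [← (Submodule.equivMapOfInjective _ (padL_injective n) W').finrank_eq, hW']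
    obtain ⟨x, hx0, hxU, hxW⟩ := exists_ne_zero_mem_inf U (W'.map (padL n)) (by
      rw [hcard, hU, hW, Fin.val_succ]; omega)
    obtain ⟨y, hyW', rfl⟩ := hxW
    have h1 := hUq _ hxU
    have h2 := hWq y hyW'
    rw [← qf_padL n A y, ← norm_padL n y] at h2
    have hpos : (0:ℝ) < ‖padL n y‖ ^ 2 := by
      have : padL n y ≠ 0 := hx0
      exact pow_pos (norm_pos_iff.mpr this) 2
    exact le_of_mul_le_mul_right (h2.trans h1) hpos
end

section
/- Let α ∈ ℝ, m ≥ 2 and s_α(R) defined for small R > 0 as the unique positive solution of s − e^{-sR}/R = −4πα, with inverse R_α(s). Then R_α(s_α(R) − R^m) = R_α(s) + O(R^{m+2}) as R → 0, where s = s_α(R) − R^m; equivalently, if s = s_α(R) − R^m then R = R_α(s)(1 + O(R^{m+1})) as R → 0. -/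
lemma exp_sub_one_le_two_mul {x : ℝ} (h0 : 0 ≤ x) (h1 : x ≤ 1/2) :
    Real.exp x - 1 ≤ 2 * x := by
  have he1 : 1 - x ≤ Real.exp (-x) := by linarith [Real.add_one_le_exp (-x)]
  have he2 : Real.exp x * Real.exp (-x) = 1 := by rw [← Real.exp_add]; simp
  have hp := Real.exp_pos x
  have hE2 : Real.exp x ≤ 2 := by nlinarith [mul_le_mul_of_nonneg_left he1 hp.le]
  have hexm1 : Real.exp (-x) ≤ 1 := Real.exp_le_one_iff.mpr (by linarith)
  nlinarith [he2, hE2, hexm1, he1]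

theorem R_alpha_taylor (α m : ℝ) (hm : 2 ≤ m) (sα Rα : ℝ → ℝ) (R₁ : ℝ) (hR₁ : 0 < R₁)
    (hsα : ∀ R : ℝ, 0 < R → R < R₁ →
      0 < sα R ∧ sα R - Real.exp (-(sα R * R)) / R = -(4 * Real.pi * α))
    (hRα : ∀ s : ℝ, max 0 (-(4 * Real.pi * α)) < s →
      0 < Rα s ∧ s - Real.exp (-(s * Rα s)) / Rα s = -(4 * Real.pi * α)) :
    ∃ C > 0, ∃ R₀ > 0, ∀ R : ℝ, 0 < R → R < R₀ →
      |R - Rα (sα R - R ^ m)| ≤ C * R ^ (m + 2) := by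
  have hπ := Real.pi_pos
  refine ⟨6 * Real.exp 2, by positivity,
    min R₁ (Real.exp (-2) / (2 * (1 + 4 * Real.pi * |α|))),
    lt_min hR₁ (by positivity), ?_⟩
  intro R hR hRlt
  have hRR₁ : R < R₁ := lt_of_lt_of_le hRlt (min_le_left _ _)
  have hRs : R < Real.exp (-2) / (2 * (1 + 4 * Real.pi * |α|)) :=
    lt_of_lt_of_le hRlt (min_le_right _ _)
  have hexp2 : Real.exp (-2) ≤ 1 := Real.exp_le_one_iff.mpr (by norm_num)
  have hRKexp : R * (2 * (1 + 4 * Real.pi * |α|)) < Real.exp (-2) :=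
    (lt_div_iff₀ (by positivity)).mp hRs
  have p0 : (0:ℝ) ≤ Real.pi * R * |α| :=
    mul_nonneg (mul_nonneg hπ.le hR.le) (abs_nonneg α)
  have p1 : (0:ℝ) ≤ Real.pi * R * (|α| + α) :=
    mul_nonneg (mul_nonneg hπ.le hR.le) (by linarith [neg_abs_le α])
  have p2 : (0:ℝ) ≤ Real.pi * R * (|α| - α) :=
    mul_nonneg (mul_nonneg hπ.le hR.le) (by linarith [le_abs_self α])
  have hRhalf : R < 1/2 := by linarith
  have hRle1 : R ≤ 1 := by linarith
  obtain ⟨ht0, htEq⟩ := hsα R hR hRR₁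
  set t := sα R with htdef
  have hRne : R ≠ 0 := ne_of_gt hR
  have h1 : Real.exp (-(t * R)) = R * (t + 4 * Real.pi * α) := by
    field_simp at htEq
    linarith
  have ht4pos : 0 < t + 4 * Real.pi * α := by
    have h2 : R * (0:ℝ) < R * (t + 4 * Real.pi * α) := by
      rw [mul_zero, ← h1]; exact Real.exp_pos _
    exact lt_of_mul_lt_mul_left h2 hR.le
  have h3 : R * (t + 4 * Real.pi * α) ≤ 1 := by
    rw [← h1]
    exact Real.exp_le_one_iff.mpr (by linarith [mul_pos ht0 hR])
  have h4 : t * R ≤ 2 := by linarith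
  have h6 : Real.exp (-2) ≤ R * (t + 4 * Real.pi * α) := by
    rw [← h1]
    exact Real.exp_le_exp.mpr (by linarith)
  -- powers of R
  have hR2 : R ^ (2:ℝ) = R * R := by
    rw [show (2:ℝ) = ((2:ℕ):ℝ) by norm_num, Real.rpow_natCast]; ring
  have hRm_pos : 0 < R ^ m := Real.rpow_pos_of_pos hR m
  have hRm_le : R ^ m ≤ R * R := by
    calc R ^ m ≤ R ^ (2:ℝ) := Real.rpow_le_rpow_of_exponent_ge hR hRle1 hm
    _ = R * R := hR2
  have hRm1 : R ^ (m + 1) = R ^ m * R := by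
    rw [Real.rpow_add hR, Real.rpow_one]
  have hRm2 : R ^ (m + 2) = R ^ m * (R * R) := by
    rw [Real.rpow_add hR, hR2]
  have hx0 : 0 < R ^ (m + 1) := Real.rpow_pos_of_pos hR _
  have hxle : R ^ (m + 1) ≤ R := by
    calc R ^ (m+1) ≤ R ^ (1:ℝ) :=
      Real.rpow_le_rpow_of_exponent_ge hR hRle1 (by linarith)
    _ = R := Real.rpow_one R
  have hR3 : R * (R * R) ≤ R := by
    linarith [mul_nonneg (mul_nonneg hR.le (sub_nonneg.mpr hRle1)) (by linarith : (0:ℝ) ≤ 1 + R)]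
  set s : ℝ := t - R ^ m with hsdef
  have hEq : 2 * R * (s + 4 * Real.pi * α)
      = 2 * (R * (t + 4 * Real.pi * α)) - 2 * (R * R ^ m) := by
    rw [hsdef]; ring
  have h' : R * R ^ m ≤ R * (R * R) := mul_le_mul_of_nonneg_left hRm_le hR.le
  have h9' : Real.exp (-2) ≤ 2 * R * (s + 4 * Real.pi * α) := by
    linarith
  have hs4pos : 0 < s + 4 * Real.pi * α := by
    have h2 : 2 * R * (0:ℝ) < 2 * R * (s + 4 * Real.pi * α) := by
      linarith [Real.exp_pos (-2:ℝ)]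
    exact lt_of_mul_lt_mul_left h2 (by positivity)
  have hEq2 : 2 * R * s = 2 * R * (s + 4 * Real.pi * α) - 8 * (Real.pi * R * α) := by
    ring
  have hs0 : 0 < s := by
    have h2 : 2 * R * (0:ℝ) < 2 * R * s := by linarith
    exact lt_of_mul_lt_mul_left h2 (by positivity)
  have h11 : max 0 (-(4 * Real.pi * α)) < s := max_lt hs0 (by linarith)
  obtain ⟨hr0, hrEq⟩ := hRα s h11
  set r := Rα s with hrdef
  have hrne : r ≠ 0 := ne_of_gt hr0
  have h12 : Real.exp (-(s * r)) = r * (s + 4 * Real.pi * α) := by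
    field_simp at hrEq
    linarith
  have hE1 : 1 < Real.exp (R ^ (m+1)) := by
    linarith [Real.add_one_le_exp (R ^ (m+1))]
  have hE3 : Real.exp (R ^ (m+1)) - 1 ≤ 2 * (R ^ m * R) := by
    have h := exp_sub_one_le_two_mul hx0.le (by linarith : R ^ (m+1) ≤ 1/2)
    exact h.trans (le_of_eq (by rw [hRm1]))
  have h13 : Real.exp (-(s * R)) = Real.exp (-(t * R)) * Real.exp (R ^ (m+1)) := by
    rw [← Real.exp_add]
    congr 1
    rw [hsdef, hRm1]; ring
  have hΔ : Real.exp (-(s * R)) - R * (s + 4 * Real.pi * α)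
      = R * (t + 4 * Real.pi * α) * (Real.exp (R ^ (m+1)) - 1) + R * R ^ m := by
    rw [h13, h1, hsdef]; ring
  have hD'pos : 0 < Real.exp (-(s * R)) - R * (s + 4 * Real.pi * α) := by
    rw [hΔ]
    linarith [mul_pos (mul_pos hR ht4pos) (sub_pos.mpr hE1), mul_pos hR hRm_pos]
  have hD'le : Real.exp (-(s * R)) - R * (s + 4 * Real.pi * α) ≤ 3 * R * R ^ m := by
    rw [hΔ]
    linarith [hE3, mul_nonneg (sub_nonneg.mpr h3) (sub_nonneg.mpr hE1.le)]
  have h16 : R ≤ r := by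
    by_contra h
    push_neg at h
    have hmono : Real.exp (-(s * R)) ≤ Real.exp (-(s * r)) := by
      apply Real.exp_le_exp.mpr
      linarith [mul_le_mul_of_nonneg_left h.le hs0.le]
    linarith [mul_pos hs4pos (sub_pos.mpr h), hmono, h12, hD'pos]
  have hmono2 : Real.exp (-(s * r)) ≤ Real.exp (-(s * R)) := by
    apply Real.exp_le_exp.mpr
    linarith [mul_le_mul_of_nonneg_left h16 hs0.le]
  have hkey : (r - R) * (s + 4 * Real.pi * α) ≤ 3 * R * R ^ m := by
    linarith [hmono2, h12, hD'le]
  -- final assembly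
  have step1 := mul_le_mul_of_nonneg_left h9' (sub_nonneg.mpr h16)
  have step2 : 2 * R * ((r - R) * (s + 4 * Real.pi * α)) ≤ 2 * R * (3 * R * R ^ m) :=
    mul_le_mul_of_nonneg_left hkey (by positivity)
  have step3 : (r - R) * Real.exp (-2) ≤ 6 * R ^ (m + 2) := by
    rw [hRm2]
    linarith [step1, step2]
  have he : Real.exp (-2) * Real.exp 2 = 1 := by
    rw [← Real.exp_add]; norm_num
  have step4 := mul_le_mul_of_nonneg_right step3 (Real.exp_pos 2).le
  rw [abs_sub_comm, abs_of_nonneg (by linarith : (0:ℝ) ≤ r - R)]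
  calc r - R = (r - R) * (Real.exp (-2) * Real.exp 2) := by rw [he, mul_one]
    _ = (r - R) * Real.exp (-2) * Real.exp 2 := by ring
    _ ≤ 6 * R ^ (m + 2) * Real.exp 2 := step4
    _ = 6 * Real.exp 2 * R ^ (m + 2) := by ring
end
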